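/- arXiv:math/0211247 — 4 statements merged into one kernel-verified Lean document; each statement's English description precedes it below -/
import Mathlib

section
/- Let (u_k) be an orthogonal family in a Hilbert space H with ‖u_k‖² = α_k > 0 such that (u_k/√α_k) is an orthonormal basis, and suppose u_k = (I + K) v_k for a bounded operator K with I + K boundedly invertible. Then (I + K)(I + F)(I + K*) = I, where I + F := s-lim ∑_{k≤N} α_k⁻¹ (·, v_k) v_k. -/
/-!
Rescaling `u_k` by `α_k^{-1/2}` gives a Hilbert basis, so every `x` expands as
`x = ∑ α_k⁻¹ ⟪u_k, x⟫ u_k`. Writing `T = I + K`, the adjoint identity `⟪v_k, T* x⟫ = ⟪T v_k, x⟫`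
turns `T G T* x = ∑ α_k⁻¹ ⟪v_k, T* x⟫ T v_k` into exactly this expansion.
-/

open Submodule Set ContinuousLinearMap
open scoped InnerProductSpace

theorem Submodule.span_range_smul_of_isUnit {R M ι : Type*} [Semiring R] [AddCommMonoid M]
    [Module R M] {c : ι → R} (hc : ∀ k, IsUnit (c k)) (u : ι → M) :
    span R (range fun k => c k • u k) = span R (range u) := by
  simp only [span_range_eq_iSup, span_singleton_smul_eq (hc _)]

section InnerProductSpace

variable {𝕜 E ι : Type*} [RCLike 𝕜] [NormedAddCommGroup E] [InnerProductSpace 𝕜 E]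
  {u : ι → E} {α : ι → ℝ}

theorem orthonormal_inv_sqrt_smul [DecidableEq ι] (hα : ∀ k, 0 < α k)
    (horth : ∀ j k, ⟪u j, u k⟫_𝕜 = if j = k then (α k : 𝕜) else 0) :
    Orthonormal 𝕜 fun k => ((√(α k) : ℝ) : 𝕜)⁻¹ • u k := by
  rw [orthonormal_iff_ite]
  intro j k
  simp only [inner_smul_left, inner_smul_right, horth, RCLike.conj_ofReal, map_inv₀]
  split_ifs with h
  · subst h
    rw [← mul_assoc, ← mul_inv, ← RCLike.ofReal_mul, Real.mul_self_sqrt (hα j).le,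
      inv_mul_cancel₀ (RCLike.ofReal_ne_zero.2 (hα j).ne')]
  · simp

theorem hasSum_inv_smul_inner_smul_of_orthogonal [DecidableEq ι] [CompleteSpace E]
    (hα : ∀ k, 0 < α k)
    (horth : ∀ j k, ⟪u j, u k⟫_𝕜 = if j = k then (α k : 𝕜) else 0)
    (htotal : (span 𝕜 (range u)).topologicalClosure = ⊤) (x : E) :
    HasSum (fun k => (α k : 𝕜)⁻¹ • (⟪u k, x⟫_𝕜 • u k)) x := by
  have honb := orthonormal_inv_sqrt_smul hα horth
  have hdense :
      ⊤ ≤ (span 𝕜 (range fun k => ((√(α k) : ℝ) : 𝕜)⁻¹ • u k)).topologicalClosure := by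
    rw [span_range_smul_of_isUnit (fun k => by simpa using (Real.sqrt_pos.2 (hα k)).ne') u,
      htotal]
  let b := HilbertBasis.mk honb hdense
  convert b.hasSum_repr x using 2 with k
  rw [b.repr_apply_apply, HilbertBasis.coe_mk, inner_smul_left, smul_smul, smul_smul, map_inv₀,
    RCLike.conj_ofReal, mul_right_comm, ← mul_inv, ← RCLike.ofReal_mul,
    Real.mul_self_sqrt (hα k).le]

theorem hasSum_apply_comp_adjoint {F : Type*} [NormedAddCommGroup F] [InnerProductSpace 𝕜 F]
    [CompleteSpace E] [CompleteSpace F] {v : ι → E} {c : ι → 𝕜} (T : E →L[𝕜] F) {G : E → E}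
    (hG : ∀ x, HasSum (fun k => c k • (⟪v k, x⟫_𝕜 • v k)) (G x)) (x : F) :
    HasSum (fun k => c k • (⟪T (v k), x⟫_𝕜 • T (v k))) (T (G (adjoint T x))) := by
  simpa [adjoint_inner_right] using (hG (adjoint T x)).mapL T

end InnerProductSpace

theorem stmt6_general {H : Type*} [NormedAddCommGroup H] [InnerProductSpace ℂ H] [CompleteSpace H]
    (K : H →L[ℂ] H)
    (v : ℕ → H) (α : ℕ → ℝ) (hα : ∀ k, 0 < α k)
    (horth : ∀ j k, inner (𝕜 := ℂ) (v j + K (v j)) (v k + K (v k))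
      = if j = k then (α k : ℂ) else 0)
    (htotal : (Submodule.span ℂ (Set.range fun k => v k + K (v k))).topologicalClosure = ⊤)
    (G : H →L[ℂ] H)
    (hG : ∀ x : H, HasSum (fun k => (α k : ℂ)⁻¹ • (inner (𝕜 := ℂ) (v k) x • v k)) (G x)) :
    (ContinuousLinearMap.id ℂ H + K).comp
        (G.comp (ContinuousLinearMap.id ℂ H + ContinuousLinearMap.adjoint K))
      = ContinuousLinearMap.id ℂ H := by
  have hadj :
      adjoint (ContinuousLinearMap.id ℂ H + K) = ContinuousLinearMap.id ℂ H + adjoint K := by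
    rw [map_add, adjoint_id]
  ext x
  have h := hasSum_apply_comp_adjoint (ContinuousLinearMap.id ℂ H + K) hG x
  rw [hadj] at h
  exact h.unique (hasSum_inv_smul_inner_smul_of_orthogonal hα horth htotal x)

/-- If `u_k = (I + K) v_k` form an orthogonal family with `⟨u_j, u_k⟩ = α_k δ_{jk}`, `α_k > 0`,
whose normalizations form an orthonormal basis (orthogonality plus totality), `I + K` being
boundedly invertible, then `(I + K)(I + F)(I + K*) = I`, where
`I + F = s-lim ∑_{k≤N} α_k⁻¹ (·, v_k) v_k =: G`. -/
theorem stmt6 {H : Type*} [NormedAddCommGroup H] [InnerProductSpace ℂ H] [CompleteSpace H]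
    (K : H →L[ℂ] H) (E : H ≃L[ℂ] H)
    (hE : (E : H →L[ℂ] H) = ContinuousLinearMap.id ℂ H + K)
    (v : ℕ → H) (α : ℕ → ℝ) (hα : ∀ k, 0 < α k)
    (horth : ∀ j k, inner (𝕜 := ℂ) (v j + K (v j)) (v k + K (v k))
      = if j = k then (α k : ℂ) else 0)
    (htotal : (Submodule.span ℂ (Set.range fun k => v k + K (v k))).topologicalClosure = ⊤)
    (G : H →L[ℂ] H)
    (hG : ∀ x : H, HasSum (fun k => (α k : ℂ)⁻¹ • (inner (𝕜 := ℂ) (v k) x • v k)) (G x)) :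
    (ContinuousLinearMap.id ℂ H + K).comp
        (G.comp (ContinuousLinearMap.id ℂ H + ContinuousLinearMap.adjoint K))
      = ContinuousLinearMap.id ℂ H :=
  stmt6_general K v α hα horth htotal G hG
end

section
/- Let (μ_k) ∈ ℓ² and (β̃_k) ∈ ℓ², with λ_k = πk + μ_k, α_k⁻¹ = 1 − β̃_k. Then the series φ(s) = ∑_{k=1}^∞ (cos(πks) − α_k⁻¹ cos(λ_k s)) converges in L²(0,2), using the decomposition cos(πks) − α_k⁻¹cos(λ_k s) = 2 sin(μ_k s/2) sin((πk + μ_k/2)s) + β̃_k cos(λ_k s) and the Riesz basis property of {sin((πk+μ_k/2)s)} and {cos(λ_k s)} in their closed linear spans in L²(0,2). -/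
/-!
With `a = π(k+1)s` and `b = μ_k s`, the mean value theorem gives
`cos a - (1 - β̃_k) cos (a + b) = β̃_k cos a + b sin a + ρ_k` with `|ρ_k| ≤ b² + |β̃_k| |b|`.
In `L²(0,2)` the systems `cos (π(k+1)s)` and `sin (π(k+1)s)` are orthonormal, so the series with
`ℓ²` coefficients `β̃_k` and `μ_k` converge; multiplication by `s` is bounded on `L²(0,2)`, which
handles `∑ μ_k s sin (π(k+1)s)`, and `‖ρ_k‖ = O(μ_k² + β̃_k²)` is summable. Completeness of `L²`
then yields the limit `φ`. Orthonormality of the unperturbed system thus replaces the Riesz basis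
property of the perturbed one.
-/

open Filter Real MeasureTheory Set

theorem ContinuousMap.memLp_restrict_Ioc (f : C(ℝ, ℝ)) (p : ENNReal) (a b : ℝ) :
    MemLp f p (volume.restrict (Ioc a b)) := by
  obtain ⟨C, hC⟩ := (isCompact_Icc (a := a) (b := b)).exists_bound_of_continuousOn
    f.continuous.continuousOn
  refine MemLp.of_bound f.continuous.aestronglyMeasurable C ?_
  filter_upwards [ae_restrict_mem measurableSet_Ioc] with s hs
  exact hC s (Ioc_subset_Icc_self hs)

noncomputable def toL2Ioc (a b : ℝ) : C(ℝ, ℝ) →ₗ[ℝ] Lp ℝ 2 (volume.restrict (Ioc a b)) where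
  toFun f := (f.memLp_restrict_Ioc 2 a b).toLp f
  map_add' _ _ := MemLp.toLp_add _ _
  map_smul' _ _ := MemLp.toLp_const_smul _ _

section toL2Ioc

variable {a b : ℝ}

theorem coeFn_toL2Ioc (f : C(ℝ, ℝ)) : toL2Ioc a b f =ᵐ[volume.restrict (Ioc a b)] f :=
  (f.memLp_restrict_Ioc 2 a b).coeFn_toLp

theorem inner_toL2Ioc (hab : a ≤ b) (f g : C(ℝ, ℝ)) :
    inner ℝ (toL2Ioc a b f) (toL2Ioc a b g) = ∫ s in a..b, f s * g s := by
  rw [L2.inner_def, intervalIntegral.integral_of_le hab]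
  refine integral_congr_ae ?_
  filter_upwards [coeFn_toL2Ioc f, coeFn_toL2Ioc g] with s hfs hgs
  rw [hfs, hgs, RCLike.inner_apply, conj_trivial]
  ring

theorem norm_toL2Ioc_sub_sq (hab : a ≤ b) (f : C(ℝ, ℝ))
    (Φ : Lp ℝ 2 (volume.restrict (Ioc a b))) :
    ‖toL2Ioc a b f - Φ‖ ^ 2 = ∫ s in a..b, (f s - Φ s) ^ 2 := by
  rw [← real_inner_self_eq_norm_sq, L2.inner_def, intervalIntegral.integral_of_le hab]
  refine integral_congr_ae ?_
  filter_upwards [Lp.coeFn_sub (toL2Ioc a b f) Φ, coeFn_toL2Ioc f] with s hs hfs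
  rw [hs, Pi.sub_apply, hfs, RCLike.inner_apply, conj_trivial]
  ring

theorem norm_toL2Ioc_le_of_abs_le {f g : C(ℝ, ℝ)} (h : ∀ s ∈ Ioc a b, |f s| ≤ |g s|) :
    ‖toL2Ioc a b f‖ ≤ ‖toL2Ioc a b g‖ := by
  refine Lp.norm_le_norm_of_ae_le ?_
  filter_upwards [coeFn_toL2Ioc f, coeFn_toL2Ioc g, ae_restrict_mem measurableSet_Ioc]
    with s hfs hgs hs
  rw [hfs, hgs]
  exact h s hs

theorem norm_toL2Ioc_mul_le {m f : C(ℝ, ℝ)} {C : ℝ} (hC : 0 ≤ C)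
    (hm : ∀ s ∈ Ioc a b, |m s| ≤ C) :
    ‖toL2Ioc a b (m * f)‖ ≤ C * ‖toL2Ioc a b f‖ := by
  calc ‖toL2Ioc a b (m * f)‖ ≤ ‖toL2Ioc a b (C • f)‖ :=
        norm_toL2Ioc_le_of_abs_le fun s hs => by
          simpa [abs_mul, abs_of_nonneg hC] using
            mul_le_mul_of_nonneg_right (hm s hs) (abs_nonneg (f s))
    _ = C * ‖toL2Ioc a b f‖ := by rw [map_smul, norm_smul, Real.norm_of_nonneg hC]

end toL2Ioc

theorem Summable.of_norm_sum_le_mul {ι E F : Type*} [SeminormedAddCommGroup E] [CompleteSpace E]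
    [SeminormedAddCommGroup F] {f : ι → E} {g : ι → F} (hg : Summable g) (C : ℝ)
    (hfg : ∀ t : Finset ι, ‖∑ i ∈ t, f i‖ ≤ C * ‖∑ i ∈ t, g i‖) : Summable f := by
  refine summable_iff_vanishing_norm.2 fun ε hε => ?_
  have hδ : 0 < ε / (|C| + 1) := by positivity
  obtain ⟨s, hs⟩ := hg.vanishing (Metric.ball_mem_nhds 0 hδ)
  refine ⟨s, fun t ht => ?_⟩
  calc ‖∑ i ∈ t, f i‖ ≤ |C| * ‖∑ i ∈ t, g i‖ :=
        (hfg t).trans (mul_le_mul_of_nonneg_right (le_abs_self C) (norm_nonneg _))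
    _ ≤ |C| * (ε / (|C| + 1)) :=
        mul_le_mul_of_nonneg_left (mem_ball_zero_iff.1 (hs t ht)).le (abs_nonneg C)
    _ < ε := by
      rw [mul_div_assoc', div_lt_iff₀ (by positivity)]
      linarith

theorem Orthonormal.summable_smul {𝕜 E ι : Type*} [RCLike 𝕜] [NormedAddCommGroup E]
    [InnerProductSpace 𝕜 E] [CompleteSpace E] {v : ι → E} (hv : Orthonormal 𝕜 v) {c : ι → 𝕜}
    (hc : Summable fun i => ‖c i‖ ^ 2) : Summable fun i => c i • v i := by
  simpa using (hv.orthogonalFamily.summable_iff_norm_sq_summable c).2 hc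

namespace Real

theorem abs_cos_add_sub_cos_add_mul_sin_le (a b : ℝ) :
    |cos (a + b) - cos a + b * sin a| ≤ b ^ 2 := by
  have hderiv : ∀ t, HasDerivAt (fun t => cos (a + t) + t * sin a) (sin a - sin (a + t)) t :=
    fun t => ((((hasDerivAt_id t).const_add a).cos).add
      ((hasDerivAt_id t).mul_const (sin a))).congr_deriv (by simp only [id, mul_one, one_mul]; ring)
  have hbound : ∀ t ∈ uIcc 0 b, ‖sin a - sin (a + t)‖ ≤ |b| := fun t ht =>
    calc |sin a - sin (a + t)| ≤ |a - (a + t)| := abs_sin_sub_sin_le _ _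
      _ = |t - 0| := by rw [sub_add_cancel_left, abs_neg, sub_zero]
      _ ≤ |b - 0| := abs_sub_left_of_mem_uIcc ht
      _ = |b| := by rw [sub_zero]
  have := (convex_uIcc 0 b).norm_image_sub_le_of_norm_hasDerivWithin_le
    (fun t _ => (hderiv t).hasDerivWithinAt) hbound left_mem_uIcc right_mem_uIcc
  simpa [sq, sub_add_eq_add_sub] using this

theorem abs_cos_sub_one_sub_mul_cos_add_sub_le (a b β : ℝ) :
    |cos a - (1 - β) * cos (a + b) - (β * cos a + b * sin a)| ≤ b ^ 2 + |β| * |b| :=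
  calc |cos a - (1 - β) * cos (a + b) - (β * cos a + b * sin a)|
      = |-(cos (a + b) - cos a + b * sin a) + β * (cos (a + b) - cos a)| := by ring_nf
    _ ≤ |cos (a + b) - cos a + b * sin a| + |β| * |cos (a + b) - cos a| := by
      simpa only [abs_neg, abs_mul] using
        abs_add_le (-(cos (a + b) - cos a + b * sin a)) (β * (cos (a + b) - cos a))
    _ ≤ b ^ 2 + |β| * |b| := by
      refine add_le_add (abs_cos_add_sub_cos_add_mul_sin_le a b)
        (mul_le_mul_of_nonneg_left ?_ (abs_nonneg β))
      simpa using abs_cos_sub_cos_le (a + b) a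

theorem integral_cos_int_mul_pi_mul (n : ℤ) :
    ∫ s in (0 : ℝ)..2, cos (n * π * s) = if n = 0 then 2 else 0 := by
  split_ifs with hn
  · simp [hn]
  · have hω : (n * π : ℝ) ≠ 0 := mul_ne_zero (Int.cast_ne_zero.2 hn) pi_ne_zero
    rw [intervalIntegral.integral_comp_mul_left (fun s => cos s) hω, integral_cos,
      show (n * π * 2 : ℝ) = (2 * n : ℤ) * π by push_cast; ring, sin_int_mul_pi]
    simp

theorem integral_cos_pi_mul_succ_sub (j k : ℕ) :
    ∫ s in (0 : ℝ)..2, cos (π * (j + 1) * s - π * (k + 1) * s) = if j = k then 2 else 0 := by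
  have h := integral_cos_int_mul_pi_mul (j - k)
  simp only [sub_eq_zero, Nat.cast_inj] at h
  rw [← h]
  congr 1 with s
  push_cast
  ring_nf

theorem integral_cos_pi_mul_succ_add (j k : ℕ) :
    ∫ s in (0 : ℝ)..2, cos (π * (j + 1) * s + π * (k + 1) * s) = 0 := by
  have h := integral_cos_int_mul_pi_mul (j + k + 2)
  rw [if_neg (by omega)] at h
  rw [← h]
  congr 1 with s
  push_cast
  ring_nf

theorem integral_cos_mul_cos_succ (j k : ℕ) :
    ∫ s in (0 : ℝ)..2, cos (π * (j + 1) * s) * cos (π * (k + 1) * s) = if j = k then 1 else 0 := by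
  have hprod : ∀ s, cos (π * (j + 1) * s) * cos (π * (k + 1) * s)
      = (cos (π * (j + 1) * s - π * (k + 1) * s) + cos (π * (j + 1) * s + π * (k + 1) * s)) / 2 :=
    fun s => by rw [cos_sub, cos_add]; ring
  simp_rw [hprod]
  rw [intervalIntegral.integral_div, intervalIntegral.integral_add
    (Continuous.intervalIntegrable (by fun_prop) _ _)
    (Continuous.intervalIntegrable (by fun_prop) _ _),
    integral_cos_pi_mul_succ_sub, integral_cos_pi_mul_succ_add]
  split_ifs <;> norm_num

theorem integral_sin_mul_sin_succ (j k : ℕ) :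
    ∫ s in (0 : ℝ)..2, sin (π * (j + 1) * s) * sin (π * (k + 1) * s) = if j = k then 1 else 0 := by
  have hprod : ∀ s, sin (π * (j + 1) * s) * sin (π * (k + 1) * s)
      = (cos (π * (j + 1) * s - π * (k + 1) * s) - cos (π * (j + 1) * s + π * (k + 1) * s)) / 2 :=
    fun s => by rw [cos_sub, cos_add]; ring
  simp_rw [hprod]
  rw [intervalIntegral.integral_div, intervalIntegral.integral_sub
    (Continuous.intervalIntegrable (by fun_prop) _ _)
    (Continuous.intervalIntegrable (by fun_prop) _ _),
    integral_cos_pi_mul_succ_sub, integral_cos_pi_mul_succ_add]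
  split_ifs <;> norm_num

end Real

noncomputable def cosMul (ω : ℝ) : C(ℝ, ℝ) := ⟨fun s => cos (ω * s), by fun_prop⟩

noncomputable def sinMul (ω : ℝ) : C(ℝ, ℝ) := ⟨fun s => sin (ω * s), by fun_prop⟩

@[simp]
theorem cosMul_apply (ω s : ℝ) : cosMul ω s = cos (ω * s) := rfl

@[simp]
theorem sinMul_apply (ω s : ℝ) : sinMul ω s = sin (ω * s) := rfl

theorem orthonormal_toL2Ioc_cosMul :
    Orthonormal ℝ fun k : ℕ => toL2Ioc 0 2 (cosMul (π * (k + 1))) :=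
  orthonormal_iff_ite.2 fun j k => by
    rw [inner_toL2Ioc zero_le_two]
    exact integral_cos_mul_cos_succ j k

theorem orthonormal_toL2Ioc_sinMul :
    Orthonormal ℝ fun k : ℕ => toL2Ioc 0 2 (sinMul (π * (k + 1))) :=
  orthonormal_iff_ite.2 fun j k => by
    rw [inner_toL2Ioc zero_le_two]
    exact integral_sin_mul_sin_succ j k

theorem summable_toL2Ioc_smul_id_mul_sinMul {c : ℕ → ℝ} (hc : Summable fun k => c k ^ 2) :
    Summable fun k : ℕ => c k • toL2Ioc 0 2 (ContinuousMap.id ℝ * sinMul (π * (k + 1))) := by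
  have hsin := orthonormal_toL2Ioc_sinMul.summable_smul (c := c) (by simpa using hc)
  refine hsin.of_norm_sum_le_mul 2 fun t => ?_
  simp_rw [← map_smul, ← map_sum, ← mul_smul_comm, ← Finset.mul_sum]
  refine norm_toL2Ioc_mul_le zero_le_two fun s hs => ?_
  rw [ContinuousMap.id_apply, abs_of_pos hs.1]
  exact hs.2

theorem summable_toL2Ioc_cosMul_sub_smul_cosMul {μ β : ℕ → ℝ} (hμ : Summable fun k => μ k ^ 2)
    (hβ : Summable fun k => β k ^ 2) :
    Summable fun k : ℕ =>
      toL2Ioc 0 2 (cosMul (π * (k + 1)) - (1 - β k) • cosMul (π * (k + 1) + μ k)) := by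
  set ρ : ℕ → C(ℝ, ℝ) := fun k => cosMul (π * (k + 1)) - (1 - β k) • cosMul (π * (k + 1) + μ k)
    - (β k • cosMul (π * (k + 1)) + μ k • (ContinuousMap.id ℝ * sinMul (π * (k + 1))))
  have hρ : ∀ k, ∀ s ∈ Ioc (0 : ℝ) 2, |ρ k s| ≤ 5 * μ k ^ 2 + β k ^ 2 := by
    intro k s hs
    have hρs : ρ k s = cos (π * (k + 1) * s) - (1 - β k) * cos (π * (k + 1) * s + μ k * s)
        - (β k * cos (π * (k + 1) * s) + μ k * s * sin (π * (k + 1) * s)) := by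
      simp only [ρ, ContinuousMap.sub_apply, ContinuousMap.add_apply, ContinuousMap.smul_apply,
        ContinuousMap.mul_apply, ContinuousMap.id_apply, cosMul_apply, sinMul_apply, smul_eq_mul]
      ring_nf
    have hb : |μ k * s| ≤ 2 * |μ k| := by
      rw [abs_mul, abs_of_pos hs.1]
      nlinarith [abs_nonneg (μ k), hs.2]
    have hsq : (μ k * s) ^ 2 ≤ 4 * μ k ^ 2 := by
      nlinarith [sq_abs (μ k * s), sq_abs (μ k), abs_nonneg (μ k * s)]
    have hβμ : |β k| * |μ k * s| ≤ μ k ^ 2 + β k ^ 2 := by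
      nlinarith [two_mul_le_add_sq |β k| |μ k|, sq_abs (β k), sq_abs (μ k), abs_nonneg (β k)]
    rw [hρs]
    linarith [abs_cos_sub_one_sub_mul_cos_add_sub_le (π * (k + 1) * s) (μ k * s) (β k)]
  have hcos := orthonormal_toL2Ioc_cosMul.summable_smul (c := β) (by simpa using hβ)
  have hsin := summable_toL2Ioc_smul_id_mul_sinMul hμ
  have hrem : Summable fun k => toL2Ioc 0 2 (ρ k) := by
    refine Summable.of_norm_bounded (g := fun k => (5 * μ k ^ 2 + β k ^ 2) * ‖toL2Ioc 0 2 1‖)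
      (((hμ.mul_left 5).add hβ).mul_right _) fun k => ?_
    -- a pointwise bound on `ρ k` makes it a bounded multiplier of the constant function `1`
    rw [← mul_one (ρ k)]
    exact norm_toL2Ioc_mul_le (by positivity) (hρ k)
  refine ((hcos.add hsin).add hrem).congr fun k => ?_
  simp only [ρ, map_sub, map_add, map_smul]
  abel

theorem stmt10_general (μ βt : ℕ → ℝ) (hμ : Summable fun k => μ k ^ 2)
    (hβ : Summable fun k => βt k ^ 2) :
    ∃ φ : ℝ → ℝ, Tendsto (fun N =>
        ∫ s in (0:ℝ)..2,
          ((∑ k ∈ Finset.range N,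
              (Real.cos (Real.pi * (k + 1) * s)
                - (1 - βt k) * Real.cos ((Real.pi * (k + 1) + μ k) * s))) - φ s) ^ 2)
      atTop (nhds 0) := by
  obtain ⟨Φ, hΦ⟩ := summable_toL2Ioc_cosMul_sub_smul_cosMul hμ hβ
  refine ⟨Φ, ?_⟩
  have hnorm := (tendsto_iff_norm_sub_tendsto_zero.1 hΦ.tendsto_sum_nat).pow 2
  rw [zero_pow two_ne_zero] at hnorm
  refine hnorm.congr fun N => ?_
  rw [← map_sum, norm_toL2Ioc_sub_sq zero_le_two]
  simp only [Finset.sum_sub_distrib, ContinuousMap.sub_apply, ContinuousMap.sum_apply,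
    cosMul_apply, ContinuousMap.coe_smul, Pi.smul_apply, smul_eq_mul]

/-- For `(μ_k), (β̃_k) ∈ ℓ²` with `λ_k = πk + μ_k` strictly increasing and positive and
`α_k⁻¹ = 1 − β̃_k`, the series `φ(s) = ∑_k (cos(πks) − α_k⁻¹ cos(λ_k s))` converges in
`L²(0,2)` (i.e. partial sums converge in the `L²(0,2)`-norm to some `φ`);
here `k ≥ 1` is encoded as `k + 1`, `k : ℕ`. -/
theorem stmt10 (μ βt : ℕ → ℝ) (hμ : Summable fun k => μ k ^ 2)
    (hβ : Summable fun k => βt k ^ 2)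
    (hmono : StrictMono fun k : ℕ => Real.pi * (k + 1) + μ k)
    (hpos : ∀ k : ℕ, 0 < Real.pi * (k + 1) + μ k) :
    ∃ φ : ℝ → ℝ, Tendsto (fun N =>
        ∫ s in (0:ℝ)..2,
          ((∑ k ∈ Finset.range N,
              (Real.cos (Real.pi * (k + 1) * s)
                - (1 - βt k) * Real.cos ((Real.pi * (k + 1) + μ k) * s))) - φ s) ^ 2)
      atTop (nhds 0) :=
  stmt10_general μ βt hμ hβ
end

section
/- Suppose λ_k = πk + μ_k with μ_k → 0 and λ_k strictly increasing, and g ∈ L²(0,1). If sin(λ_k) = −∫₀¹ g(y) sin(λ_k y) dy for all k ∈ ℕ, then (μ_k) ∈ ℓ². (The numbers sin(λ_k) = (−1)^k sin(μ_k) are Fourier coefficients of −g with respect to the basis biorthogonal to the Riesz basis {sin(λ_k x)}, hence square-summable, and μ_k → 0 implies |μ_k| ≤ 2|sin μ_k| for large k.) -/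
open Filter MeasureTheory Real

/-! Expanding to first order in `μ_k`,
`∫₀¹ g(y) sin((πk + μ_k) y) dy = A_k + μ_k B_k + O(μ_k²)`, where `A_k` and `B_k` are the
coefficients of `g(y)` and `y g(y)` in the orthogonal systems `sin(πky)` and `cos(πky)` on `[0,1]`.
Bessel's inequality makes `(A_k)` square-summable and forces `B_k → 0`. Since
`|sin(πk + μ_k)| = |sin μ_k| ≥ |μ_k| / 2` for small `μ_k`, eventually `|μ_k| ≤ 4 |A_k|`. -/

lemma integral_cos_pi_int_mul (j : ℤ) :
    ∫ y in (0:ℝ)..1, cos (π * j * y) = if j = 0 then 1 else 0 := by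
  split_ifs with hj
  · simp [hj]
  · have hπj : π * j ≠ 0 := mul_ne_zero pi_ne_zero (Int.cast_ne_zero.2 hj)
    rw [intervalIntegral.integral_comp_mul_left (fun x => cos x) hπj, integral_cos, mul_comm π,
      mul_one, mul_zero, sin_int_mul_pi, sin_zero, sub_zero, smul_zero]

lemma integral_cos_pi_mul_sub_pi_mul (n m : ℕ) :
    ∫ y in (0:ℝ)..1, cos (π * (n + 1) * y - π * (m + 1) * y) = if n = m then 1 else 0 := by
  have h := integral_cos_pi_int_mul (n - m)
  push_cast at h
  simp only [sub_eq_zero, Nat.cast_inj] at h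
  rw [← h]
  congr with y
  ring_nf

lemma integral_cos_pi_mul_add_pi_mul (n m : ℕ) :
    ∫ y in (0:ℝ)..1, cos (π * (n + 1) * y + π * (m + 1) * y) = 0 := by
  have h := integral_cos_pi_int_mul (n + m + 2)
  rw [if_neg (by omega)] at h
  push_cast at h
  rw [← h]
  congr with y
  ring_nf

lemma integral_sin_pi_mul_mul_sin_pi_mul (n m : ℕ) :
    ∫ y in (0:ℝ)..1, sin (π * (n + 1) * y) * sin (π * (m + 1) * y)
      = if n = m then 1 / 2 else 0 := by
  simp_rw [fun a b : ℝ => show sin a * sin b = (cos (a - b) - cos (a + b)) / 2 by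
    rw [cos_sub, cos_add]; ring]
  rw [intervalIntegral.integral_div,
    intervalIntegral.integral_sub ((by fun_prop : Continuous _).intervalIntegrable _ _)
      ((by fun_prop : Continuous _).intervalIntegrable _ _),
    integral_cos_pi_mul_sub_pi_mul, integral_cos_pi_mul_add_pi_mul]
  split_ifs <;> norm_num

lemma integral_cos_pi_mul_mul_cos_pi_mul (n m : ℕ) :
    ∫ y in (0:ℝ)..1, cos (π * (n + 1) * y) * cos (π * (m + 1) * y)
      = if n = m then 1 / 2 else 0 := by
  simp_rw [fun a b : ℝ => show cos a * cos b = (cos (a - b) + cos (a + b)) / 2 by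
    rw [cos_sub, cos_add]; ring]
  rw [intervalIntegral.integral_div,
    intervalIntegral.integral_add ((by fun_prop : Continuous _).intervalIntegrable _ _)
      ((by fun_prop : Continuous _).intervalIntegrable _ _),
    integral_cos_pi_mul_sub_pi_mul, integral_cos_pi_mul_add_pi_mul]
  split_ifs <;> norm_num

lemma abs_le_two_mul_abs_sin {t : ℝ} (ht : |t| ≤ 1) : |t| ≤ 2 * |sin t| := by
  have h := mul_abs_le_abs_sin (ht.trans (by linarith [pi_gt_three]))
  have : 1 / 2 * |t| ≤ 2 / π * |t| :=
    mul_le_mul_of_nonneg_right (by rw [div_le_div_iff₀ two_pos pi_pos]; linarith [pi_le_four])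
      (abs_nonneg t)
  linarith

lemma abs_sin_add_sub_sin_sub_mul_cos_le (x : ℝ) {h : ℝ} (hh : |h| ≤ 1) :
    |sin (x + h) - sin x - h * cos x| ≤ h ^ 2 := by
  have hcos : |cos h - 1| ≤ h ^ 2 / 2 := by
    rw [abs_le]; constructor <;> linarith [one_sub_sq_div_two_le_cos (x := h), cos_le_one h]
  have hsin : |sin h - h| ≤ h ^ 2 / 2 := by
    rw [abs_sub_comm]
    refine (abs_sub_sin_le h).trans ?_
    have : |h| ^ 3 ≤ |h| ^ 2 := pow_le_pow_of_le_one (abs_nonneg h) hh (by norm_num)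
    rw [sq_abs] at this
    linarith [sq_nonneg h]
  calc |sin (x + h) - sin x - h * cos x| = |sin x * (cos h - 1) + cos x * (sin h - h)| := by
        rw [sin_add]; ring_nf
    _ ≤ |sin x| * |cos h - 1| + |cos x| * |sin h - h| := by
        rw [← abs_mul, ← abs_mul]; exact abs_add_le _ _
    _ ≤ 1 * (h ^ 2 / 2) + 1 * (h ^ 2 / 2) := by
        gcongr
        exacts [abs_sin_le_one x, abs_cos_le_one x]
    _ = h ^ 2 := by ring

lemma summable_sq_integral_mul_of_orthogonal {α ι : Type*} [MeasurableSpace α] [DecidableEq ι]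
    {ν : Measure α} {v : ι → α → ℝ} {c : ℝ} (hc : 0 < c) (hv : ∀ i, MemLp (v i) 2 ν)
    (horth : ∀ i j, ∫ x, v i x * v j x ∂ν = if i = j then c else 0)
    {f : α → ℝ} (hf : MemLp f 2 ν) :
    Summable fun i => (∫ x, f x * v i x ∂ν) ^ 2 := by
  have inner_toLp : ∀ {φ ψ : α → ℝ} (hφ : MemLp φ 2 ν) (hψ : MemLp ψ 2 ν),
      inner ℝ (hφ.toLp φ) (hψ.toLp ψ) = ∫ x, φ x * ψ x ∂ν := by
    intro φ ψ hφ hψ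
    rw [L2.inner_def]
    refine integral_congr_ae ?_
    filter_upwards [hφ.coeFn_toLp, hψ.coeFn_toLp] with x hφx hψx
    simp [hφx, hψx, mul_comm]
  have hw : ∀ i, MemLp (fun x => (√c)⁻¹ * v i x) 2 ν := fun i => (hv i).const_mul _
  have hcc : (√c)⁻¹ * (√c)⁻¹ = c⁻¹ := by rw [← mul_inv, mul_self_sqrt hc.le]
  have horthonormal : Orthonormal ℝ fun i => (hw i).toLp _ := by
    rw [orthonormal_iff_ite]
    intro i j
    rw [inner_toLp]
    simp_rw [mul_mul_mul_comm _ (v i _), hcc]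
    rw [integral_const_mul, horth]
    split_ifs <;> simp [hc.ne']
  refine (summable_mul_left_iff (inv_ne_zero hc.ne')).1
    ((horthonormal.inner_products_summable (hf.toLp f)).congr fun i => ?_)
  rw [inner_toLp, norm_eq_abs, sq_abs]
  simp_rw [mul_assoc, mul_comm (v i _)]
  rw [integral_const_mul, mul_pow, inv_pow, sq_sqrt hc.le]

lemma summable_sq_integral_mul_sin_pi_mul {f : ℝ → ℝ}
    (hf : MemLp f 2 (volume.restrict (Set.Ioc 0 1))) :
    Summable fun k : ℕ => (∫ y in (0:ℝ)..1, f y * sin (π * (k + 1) * y)) ^ 2 := by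
  simp_rw [intervalIntegral.integral_of_le zero_le_one]
  refine summable_sq_integral_mul_of_orthogonal one_half_pos (fun k => ?_) (fun n m => ?_) hf
  · exact MemLp.of_bound (by fun_prop : Continuous _).aestronglyMeasurable 1
      (ae_of_all _ fun y => abs_sin_le_one _)
  · rw [← intervalIntegral.integral_of_le zero_le_one, integral_sin_pi_mul_mul_sin_pi_mul]

lemma summable_sq_integral_mul_cos_pi_mul {f : ℝ → ℝ}
    (hf : MemLp f 2 (volume.restrict (Set.Ioc 0 1))) :
    Summable fun k : ℕ => (∫ y in (0:ℝ)..1, f y * cos (π * (k + 1) * y)) ^ 2 := by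
  simp_rw [intervalIntegral.integral_of_le zero_le_one]
  refine summable_sq_integral_mul_of_orthogonal one_half_pos (fun k => ?_) (fun n m => ?_) hf
  · exact MemLp.of_bound (by fun_prop : Continuous _).aestronglyMeasurable 1
      (ae_of_all _ fun y => abs_cos_le_one _)
  · rw [← intervalIntegral.integral_of_le zero_le_one, integral_cos_pi_mul_mul_cos_pi_mul]

lemma abs_integral_mul_sin_add_sub_le {g : ℝ → ℝ} (hg : IntervalIntegrable g volume 0 1)
    (a : ℝ) {m : ℝ} (hm : |m| ≤ 1) :
    |(∫ y in (0:ℝ)..1, g y * sin ((a + m) * y)) - (∫ y in (0:ℝ)..1, g y * sin (a * y))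
      - m * ∫ y in (0:ℝ)..1, g y * y * cos (a * y)| ≤ m ^ 2 * ∫ y in (0:ℝ)..1, |g y| := by
  rw [← intervalIntegral.integral_sub (hg.mul_continuousOn (by fun_prop))
      (hg.mul_continuousOn (by fun_prop)), ← intervalIntegral.integral_const_mul,
    ← intervalIntegral.integral_sub
      ((hg.mul_continuousOn (by fun_prop)).sub (hg.mul_continuousOn (by fun_prop)))
      (((hg.mul_continuousOn (by fun_prop : ContinuousOn (fun y : ℝ => y) _)).mul_continuousOn
        (by fun_prop)).const_mul m),
    ← intervalIntegral.integral_const_mul, ← norm_eq_abs]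
  refine intervalIntegral.norm_integral_le_of_norm_le zero_le_one
    (ae_of_all _ fun y hy => ?_) (hg.abs.const_mul _)
  have hmy : |m * y| ≤ 1 := by
    rw [abs_mul, abs_of_pos hy.1]; exact mul_le_one₀ hm hy.1.le hy.2
  have hmy2 : (m * y) ^ 2 ≤ m ^ 2 := by
    rw [mul_pow]; exact mul_le_of_le_one_right (sq_nonneg m) (pow_le_one₀ hy.1.le hy.2)
  calc ‖g y * sin ((a + m) * y) - g y * sin (a * y) - m * (g y * y * cos (a * y))‖
      = |g y| * |sin (a * y + m * y) - sin (a * y) - m * y * cos (a * y)| := by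
        rw [norm_eq_abs, ← abs_mul, add_mul]; ring_nf
    _ ≤ |g y| * (m * y) ^ 2 := by
        gcongr; exact abs_sin_add_sub_sin_sub_mul_cos_le _ hmy
    _ ≤ m ^ 2 * |g y| := by rw [mul_comm]; gcongr

lemma eventually_abs_le_of_tendsto_zero {ι : Type*} {l : Filter ι} {x : ι → ℝ}
    (hx : Tendsto x l (nhds 0)) {ε : ℝ} (hε : 0 < ε) : ∀ᶠ k in l, |x k| ≤ ε := by
  filter_upwards [Metric.tendsto_nhds.1 hx ε hε] with k hk
  rw [dist_zero_right, norm_eq_abs] at hk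
  exact hk.le

lemma summable_sq_of_abs_sin_le {μ A B : ℕ → ℝ} {C : ℝ} (hμ : Tendsto μ atTop (nhds 0))
    (hA : Summable fun k => A k ^ 2) (hB : Tendsto B atTop (nhds 0))
    (hsin : ∀ᶠ k in atTop, |sin (μ k)| ≤ |A k| + |μ k| * |B k| + C * μ k ^ 2) :
    Summable fun k => μ k ^ 2 := by
  refine Summable.of_norm_bounded_eventually_nat (hA.mul_left 16) ?_
  filter_upwards [hsin, eventually_abs_le_of_tendsto_zero hμ one_pos,
    eventually_abs_le_of_tendsto_zero hB (by norm_num : (0:ℝ) < 1 / 8),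
    eventually_abs_le_of_tendsto_zero (by simpa using hμ.const_mul C)
      (by norm_num : (0:ℝ) < 1 / 8)]
    with k hk hμ1 hB8 hCμ8
  have hlow := abs_le_two_mul_abs_sin hμ1
  have hquad : C * μ k ^ 2 ≤ |μ k| / 8 := by
    calc C * μ k ^ 2 ≤ |C * μ k| * |μ k| := by
          rw [← abs_mul, sq, ← mul_assoc]; exact le_abs_self _
      _ ≤ |μ k| / 8 := by nlinarith [abs_nonneg (μ k)]
  have hlin : |μ k| * |B k| ≤ |μ k| / 8 := by nlinarith [abs_nonneg (μ k)]
  have hμA : |μ k| ≤ 4 * |A k| := by linarith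
  rw [norm_eq_abs, abs_of_nonneg (sq_nonneg _), ← sq_abs, ← sq_abs (A k)]
  nlinarith [abs_nonneg (μ k)]

lemma tendsto_zero_of_summable_sq {x : ℕ → ℝ} (hx : Summable fun k => x k ^ 2) :
    Tendsto x atTop (nhds 0) := by
  refine tendsto_zero_iff_abs_tendsto_zero _ |>.2 ?_
  simpa [Function.comp_def, sqrt_sq_eq_abs] using hx.tendsto_atTop_zero.sqrt

lemma abs_sin_le_of_sin_eq_neg_integral {g : ℝ → ℝ} (hg : IntervalIntegrable g volume 0 1)
    (n : ℕ) {m : ℝ} (hm : |m| ≤ 1)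
    (h : sin (π * (n + 1) + m) = - ∫ y in (0:ℝ)..1, g y * sin ((π * (n + 1) + m) * y)) :
    |sin m| ≤ |∫ y in (0:ℝ)..1, g y * sin (π * (n + 1) * y)|
      + |m| * |∫ y in (0:ℝ)..1, g y * y * cos (π * (n + 1) * y)|
      + (∫ y in (0:ℝ)..1, |g y|) * m ^ 2 := by
  have hshift : |sin m| = |sin (π * (n + 1) + m)| := by
    rw [add_comm, show π * (n + 1) = ((n + 1 : ℕ) : ℝ) * π by push_cast; ring,
      sin_add_nat_mul_pi, abs_mul, abs_pow, abs_neg, abs_one, one_pow, one_mul]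
  have htaylor := abs_integral_mul_sin_add_sub_le hg (π * (n + 1)) hm
  set I := ∫ y in (0:ℝ)..1, g y * sin ((π * (n + 1) + m) * y)
  set A := ∫ y in (0:ℝ)..1, g y * sin (π * (n + 1) * y)
  set B := ∫ y in (0:ℝ)..1, g y * y * cos (π * (n + 1) * y)
  calc |sin m| = |(I - A - m * B) + A + m * B| := by
        rw [hshift, h, abs_neg]; congr 1; ring
    _ ≤ |I - A - m * B| + |A| + |m * B| := abs_add_three _ _ _
    _ ≤ |A| + |m| * |B| + (∫ y in (0:ℝ)..1, |g y|) * m ^ 2 := by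
        rw [abs_mul]; linarith

theorem stmt17_general (μ : ℕ → ℝ) (g : ℝ → ℝ)
    (hμ0 : Tendsto μ atTop (nhds 0))
    (hgm : Measurable g)
    (hg : MeasureTheory.IntegrableOn (fun y => g y ^ 2) (Set.Ioc (0:ℝ) 1))
    (heq : ∀ k : ℕ, Real.sin (Real.pi * (k + 1) + μ k)
      = - ∫ y in (0:ℝ)..1, g y * Real.sin ((Real.pi * (k + 1) + μ k) * y)) :
    Summable fun k => μ k ^ 2 := by
  have hg2 : MemLp g 2 (volume.restrict (Set.Ioc 0 1)) :=
    (memLp_two_iff_integrable_sq hgm.aestronglyMeasurable).2 hg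
  have hgy : MemLp (fun y => g y * y) 2 (volume.restrict (Set.Ioc 0 1)) := by
    refine hg2.of_le (by fun_prop) ?_
    filter_upwards [ae_restrict_mem measurableSet_Ioc] with y hy
    rw [norm_mul, norm_eq_abs y, abs_of_pos hy.1]
    exact mul_le_of_le_one_right (norm_nonneg _) hy.2
  have hgi : IntervalIntegrable g volume 0 1 :=
    (intervalIntegrable_iff_integrableOn_Ioc_of_le zero_le_one).2 (hg2.integrable one_le_two)
  exact summable_sq_of_abs_sin_le hμ0 (summable_sq_integral_mul_sin_pi_mul hg2)
    (tendsto_zero_of_summable_sq (summable_sq_integral_mul_cos_pi_mul hgy))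
    ((eventually_abs_le_of_tendsto_zero hμ0 one_pos).mono fun k hk =>
      abs_sin_le_of_sin_eq_neg_integral hgi k hk (heq k))

/-- If `λ_k = πk + μ_k` is strictly increasing with `μ_k → 0`, `g ∈ L²(0,1)`, and
`sin(λ_k) = −∫₀¹ g(y) sin(λ_k y) dy` for all `k`, then `(μ_k) ∈ ℓ²`.
Here `k ≥ 1` is encoded as `k + 1`, `k : ℕ`. -/
theorem stmt17 (μ : ℕ → ℝ) (g : ℝ → ℝ)
    (hμ0 : Tendsto μ atTop (nhds 0))
    (hmono : StrictMono fun k : ℕ => Real.pi * (k + 1) + μ k)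
    (hgm : Measurable g)
    (hg : MeasureTheory.IntegrableOn (fun y => g y ^ 2) (Set.Ioc (0:ℝ) 1))
    (heq : ∀ k : ℕ, Real.sin (Real.pi * (k + 1) + μ k)
      = - ∫ y in (0:ℝ)..1, g y * Real.sin ((Real.pi * (k + 1) + μ k) * y)) :
    Summable fun k => μ k ^ 2 :=
  stmt17_general μ g hμ0 hgm hg heq
end

section
/- If φ_n → φ in L²(0,2) and K_n → K in 𝔖₂ (as integral operators on L²(0,1) with kernels k_n, k supported on {x ≥ y}), and f_n(x,y) = φ_n(x+y) − φ_n(x−y), then the functions σ_n(x) := −2φ_n(2x) − 2∫₀ˣ k_n(x,s) f_n(s,x) ds converge in L²(0,1) to σ(x) := −2φ(2x) − 2∫₀ˣ k(x,s) f(s,x) ds; moreover ‖∫₀ˣ k(x,s)f(s,x)ds‖_{L²(0,1)} ≤ √2 ‖K‖_{𝔖₂} ‖φ‖_{L²(0,2)}. -/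
/-!
For even `ψ` and `0 ≤ x ≤ 1`, the substitutions `s ↦ s + x` and `s ↦ x - s` give
`∫₀ˣ |ψ(s+x) - ψ(s-x)|² ds ≤ 2 ∫₀^{2x} |ψ|² ≤ 2 ‖ψ‖²_{L²(0,2)}`, uniformly in `x`.
Cauchy–Schwarz in `s` and Fubini in `x` then bound `T(κ, ψ)(x) = ∫₀ˣ κ(x,s) (ψ(s+x) - ψ(s-x)) ds`
by `‖T(κ, ψ)‖² ≤ 2 ‖κ‖² ‖ψ‖²`. Convergence follows by bilinearity,
`T(κₙ, ψₙ) - T(κ, ψ) = T(κₙ - κ, ψₙ) + T(κ, ψₙ - ψ)`, the norms `‖ψₙ‖` staying bounded, while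
the term `φₙ(2x) - φ(2x)` is a rescaling of `φₙ - φ`.
-/

open Filter MeasureTheory Set Topology

section SquareIntegrable

variable {α : Type*} [MeasurableSpace α] {μ : Measure α} {u v : α → ℝ}

theorem sq_integral_mul_le_integral_sq_mul_integral_sq (hu : Integrable (fun a => u a ^ 2) μ)
    (hv : Integrable (fun a => v a ^ 2) μ) (huv : Integrable (fun a => u a * v a) μ) :
    (∫ a, u a * v a ∂μ) ^ 2 ≤ (∫ a, u a ^ 2 ∂μ) * ∫ a, v a ^ 2 ∂μ := by
  have hquad : ∀ t : ℝ, 0 ≤ (∫ a, u a ^ 2 ∂μ) * (t * t) + 2 * (∫ a, u a * v a ∂μ) * t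
      + ∫ a, v a ^ 2 ∂μ := fun t => by
    have hexpand : ∫ a, (t * u a + v a) ^ 2 ∂μ
        = ∫ a, (t ^ 2 * u a ^ 2 + 2 * t * (u a * v a)) + v a ^ 2 ∂μ :=
      integral_congr_ae (ae_of_all _ fun a => by ring)
    have hsum : Integrable (fun a => t ^ 2 * u a ^ 2 + 2 * t * (u a * v a)) μ :=
      (hu.const_mul _).add (huv.const_mul _)
    rw [integral_add hsum hv, integral_add (hu.const_mul _) (huv.const_mul _), integral_const_mul,
      integral_const_mul] at hexpand
    have hnonneg : 0 ≤ ∫ a, (t * u a + v a) ^ 2 ∂μ := integral_nonneg fun a => sq_nonneg _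
    nlinarith
  have hdiscr := discrim_le_zero hquad
  rw [discrim] at hdiscr
  nlinarith

theorem integrable_mul_of_integrable_sq (hu : AEStronglyMeasurable u μ)
    (hv : AEStronglyMeasurable v μ) (hu2 : Integrable (fun a => u a ^ 2) μ)
    (hv2 : Integrable (fun a => v a ^ 2) μ) : Integrable (fun a => u a * v a) μ :=
  ((memLp_two_iff_integrable_sq hu).2 hu2).integrable_mul ((memLp_two_iff_integrable_sq hv).2 hv2)

theorem integrable_sub_sq_of_integrable_sq (hu : AEStronglyMeasurable u μ)
    (hv : AEStronglyMeasurable v μ) (hu2 : Integrable (fun a => u a ^ 2) μ)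
    (hv2 : Integrable (fun a => v a ^ 2) μ) : Integrable (fun a => (u a - v a) ^ 2) μ :=
  (((memLp_two_iff_integrable_sq hu).2 hu2).sub
    ((memLp_two_iff_integrable_sq hv).2 hv2)).integrable_sq

theorem integral_sq_le_two_mul_integral_sq_sub_add (hu2 : Integrable (fun a => u a ^ 2) μ)
    (hv2 : Integrable (fun a => v a ^ 2) μ) (huv2 : Integrable (fun a => (u a - v a) ^ 2) μ) :
    ∫ a, u a ^ 2 ∂μ ≤ 2 * (∫ a, (u a - v a) ^ 2 ∂μ) + 2 * ∫ a, v a ^ 2 ∂μ := by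
  rw [← integral_const_mul, ← integral_const_mul,
    ← integral_add (huv2.const_mul _) (hv2.const_mul _)]
  exact integral_mono hu2 ((huv2.const_mul _).add (hv2.const_mul _))
    fun a => by nlinarith [sq_nonneg (u a - 2 * v a)]

theorem tendsto_integral_sq_add {ι : Type*} {l : Filter ι} {a b : ι → α → ℝ} (r s : ℝ)
    (ha : ∀ i, Integrable (fun x => a i x ^ 2) μ) (hb : ∀ i, Integrable (fun x => b i x ^ 2) μ)
    (ha0 : Tendsto (fun i => ∫ x, a i x ^ 2 ∂μ) l (𝓝 0))
    (hb0 : Tendsto (fun i => ∫ x, b i x ^ 2 ∂μ) l (𝓝 0)) :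
    Tendsto (fun i => ∫ x, (r * a i x + s * b i x) ^ 2 ∂μ) l (𝓝 0) := by
  have hbound : ∀ i, ∫ x, (r * a i x + s * b i x) ^ 2 ∂μ
      ≤ 2 * r ^ 2 * (∫ x, a i x ^ 2 ∂μ) + 2 * s ^ 2 * ∫ x, b i x ^ 2 ∂μ := fun i => by
    rw [← integral_const_mul, ← integral_const_mul,
      ← integral_add ((ha i).const_mul _) ((hb i).const_mul _)]
    refine integral_mono_of_nonneg (ae_of_all _ fun x => sq_nonneg _)
      (((ha i).const_mul _).add ((hb i).const_mul _)) (ae_of_all _ fun x => ?_)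
    nlinarith [sq_nonneg (r * a i x - s * b i x)]
  refine squeeze_zero (fun i => integral_nonneg fun x => sq_nonneg _) hbound ?_
  simpa using (ha0.const_mul (2 * r ^ 2)).add (hb0.const_mul (2 * s ^ 2))

end SquareIntegrable

theorem integrableOn_comp_two_mul {g : ℝ → ℝ} (hg : IntegrableOn g (Ioc 0 2)) :
    IntegrableOn (fun x => g (2 * x)) (Ioc 0 1) := by
  have h := ((intervalIntegrable_iff_integrableOn_Ioc_of_le zero_le_two).2 hg).comp_mul_left
    (c := 2)
  norm_num at h
  exact (intervalIntegrable_iff_integrableOn_Ioc_of_le zero_le_one).1 h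

theorem setIntegral_comp_two_mul (g : ℝ → ℝ) :
    ∫ x in Ioc 0 1, g (2 * x) = 2⁻¹ * ∫ x in Ioc 0 2, g x := by
  rw [← intervalIntegral.integral_of_le zero_le_one, ← intervalIntegral.integral_of_le zero_le_two,
    intervalIntegral.integral_comp_mul_left g two_ne_zero]
  norm_num

noncomputable def kernelTransform (κ : ℝ → ℝ → ℝ) (ψ : ℝ → ℝ) (x : ℝ) : ℝ :=
  ∫ s in (0:ℝ)..x, κ x s * (ψ (s + x) - ψ (s - x))

structure EvenSqIntegrable (ψ : ℝ → ℝ) : Prop where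
  measurable : Measurable ψ
  even : ∀ s, ψ (-s) = ψ s
  integrableOn_sq : IntegrableOn (fun s => ψ s ^ 2) (Ioc 0 2)

structure LowerKernelSqIntegrable (κ : ℝ → ℝ → ℝ) : Prop where
  measurable : Measurable (Function.uncurry κ)
  eq_zero_of_lt : ∀ x y, x < y → κ x y = 0
  integrableOn_sq : IntegrableOn (fun p : ℝ × ℝ => κ p.1 p.2 ^ 2) (Ioc 0 1 ×ˢ Ioc 0 1)

section KernelTransform

variable {ψ ψ' : ℝ → ℝ} {κ κ' : ℝ → ℝ → ℝ} {x : ℝ}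

namespace EvenSqIntegrable

theorem sub (hψ : EvenSqIntegrable ψ) (hψ' : EvenSqIntegrable ψ') :
    EvenSqIntegrable (ψ - ψ') where
  measurable := hψ.measurable.sub hψ'.measurable
  even s := by simp only [Pi.sub_apply, hψ.even, hψ'.even]
  integrableOn_sq := integrable_sub_sq_of_integrable_sq hψ.measurable.aestronglyMeasurable
    hψ'.measurable.aestronglyMeasurable hψ.integrableOn_sq hψ'.integrableOn_sq

theorem intervalIntegrable_sq (hψ : EvenSqIntegrable ψ) {a b : ℝ} (ha : 0 ≤ a) (hab : a ≤ b)
    (hb : b ≤ 2) : IntervalIntegrable (fun s => ψ s ^ 2) volume a b :=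
  (intervalIntegrable_iff_integrableOn_Ioc_of_le hab).2
    (hψ.integrableOn_sq.mono_set (Ioc_subset_Ioc ha hb))

theorem comp_sub_eq (hψ : EvenSqIntegrable ψ) (s x : ℝ) : ψ (s - x) = ψ (x - s) := by
  rw [← hψ.even, neg_sub]

theorem intervalIntegrable_sq_comp_add_right (hψ : EvenSqIntegrable ψ) (hx0 : 0 ≤ x)
    (hx1 : x ≤ 1) : IntervalIntegrable (fun s => ψ (s + x) ^ 2) volume 0 x := by
  simpa [two_mul] using
    (hψ.intervalIntegrable_sq hx0 (by linarith) (by linarith) :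
      IntervalIntegrable _ volume x (2 * x)).comp_add_right x

theorem intervalIntegrable_sq_comp_sub_right (hψ : EvenSqIntegrable ψ) (hx0 : 0 ≤ x)
    (hx1 : x ≤ 1) : IntervalIntegrable (fun s => ψ (s - x) ^ 2) volume 0 x := by
  simp_rw [hψ.comp_sub_eq _ x]
  simpa using ((hψ.intervalIntegrable_sq le_rfl hx0 (by linarith)).comp_sub_left x).symm

theorem intervalIntegrable_sq_reflect (hψ : EvenSqIntegrable ψ) (hx0 : 0 ≤ x) (hx1 : x ≤ 1) :
    IntervalIntegrable (fun s => (ψ (s + x) - ψ (s - x)) ^ 2) volume 0 x := by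
  have hm := hψ.measurable
  rw [intervalIntegrable_iff_integrableOn_Ioc_of_le hx0]
  exact integrable_sub_sq_of_integrable_sq
    (by fun_prop : Measurable fun s => ψ (s + x)).aestronglyMeasurable
    (by fun_prop : Measurable fun s => ψ (s - x)).aestronglyMeasurable
    ((intervalIntegrable_iff_integrableOn_Ioc_of_le hx0).1
      (hψ.intervalIntegrable_sq_comp_add_right hx0 hx1))
    ((intervalIntegrable_iff_integrableOn_Ioc_of_le hx0).1
      (hψ.intervalIntegrable_sq_comp_sub_right hx0 hx1))

theorem integral_sq_reflect_le (hψ : EvenSqIntegrable ψ) (hx0 : 0 ≤ x) (hx1 : x ≤ 1) :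
    ∫ s in (0:ℝ)..x, (ψ (s + x) - ψ (s - x)) ^ 2 ≤ 2 * ∫ s in Ioc 0 2, ψ s ^ 2 := by
  have hplus := hψ.intervalIntegrable_sq_comp_add_right hx0 hx1
  have hminus := hψ.intervalIntegrable_sq_comp_sub_right hx0 hx1
  rw [← intervalIntegral.integral_of_le zero_le_two]
  calc ∫ s in (0:ℝ)..x, (ψ (s + x) - ψ (s - x)) ^ 2
      ≤ ∫ s in (0:ℝ)..x, (2 * ψ (s + x) ^ 2 + 2 * ψ (s - x) ^ 2) :=
        intervalIntegral.integral_mono_on hx0 (hψ.intervalIntegrable_sq_reflect hx0 hx1)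
          ((hplus.const_mul 2).add (hminus.const_mul 2))
          fun s _ => by nlinarith [sq_nonneg (ψ (s + x) + ψ (s - x))]
    _ = 2 * ((∫ s in (0:ℝ)..x, ψ s ^ 2) + ∫ s in x..2 * x, ψ s ^ 2) := by
        have hreflect : ∫ s in (0:ℝ)..x, ψ (s - x) ^ 2 = ∫ s in (0:ℝ)..x, ψ s ^ 2 := by
          simp_rw [hψ.comp_sub_eq _ x]
          simp [intervalIntegral.integral_comp_sub_left (fun s => ψ s ^ 2) x]
        rw [intervalIntegral.integral_add (hplus.const_mul 2) (hminus.const_mul 2),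
          intervalIntegral.integral_const_mul, intervalIntegral.integral_const_mul, hreflect,
          intervalIntegral.integral_comp_add_right (fun s => ψ s ^ 2) x]
        ring_nf
    _ = 2 * ∫ s in (0:ℝ)..2 * x, ψ s ^ 2 := by
        rw [intervalIntegral.integral_add_adjacent_intervals
          (hψ.intervalIntegrable_sq le_rfl hx0 (by linarith))
          (hψ.intervalIntegrable_sq hx0 (by linarith) (by linarith))]
    _ ≤ 2 * ∫ s in (0:ℝ)..2, ψ s ^ 2 := by
        gcongr
        exact intervalIntegral.integral_mono_interval le_rfl (by linarith) (by linarith)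
          (ae_of_all _ fun s => sq_nonneg _) (hψ.intervalIntegrable_sq le_rfl zero_le_two le_rfl)

end EvenSqIntegrable

namespace LowerKernelSqIntegrable

theorem sub (hκ : LowerKernelSqIntegrable κ) (hκ' : LowerKernelSqIntegrable κ') :
    LowerKernelSqIntegrable (κ - κ') where
  measurable := hκ.measurable.sub hκ'.measurable
  eq_zero_of_lt x y h := by
    simp only [Pi.sub_apply, hκ.eq_zero_of_lt x y h, hκ'.eq_zero_of_lt x y h, sub_zero]
  integrableOn_sq := integrable_sub_sq_of_integrable_sq hκ.measurable.aestronglyMeasurable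
    hκ'.measurable.aestronglyMeasurable hκ.integrableOn_sq hκ'.integrableOn_sq

theorem integrable_prod (hκ : LowerKernelSqIntegrable κ) :
    Integrable (fun p : ℝ × ℝ => κ p.1 p.2 ^ 2)
      ((volume.restrict (Ioc 0 1)).prod (volume.restrict (Ioc 0 1))) := by
  rw [Measure.prod_restrict, ← Measure.volume_eq_prod]
  exact hκ.integrableOn_sq

theorem ae_integrableOn_sq_section (hκ : LowerKernelSqIntegrable κ) :
    ∀ᵐ x ∂volume.restrict (Ioc (0:ℝ) 1), IntegrableOn (fun s => κ x s ^ 2) (Ioc 0 1) :=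
  hκ.integrable_prod.prod_right_ae

theorem integrableOn_integral_sq_section (hκ : LowerKernelSqIntegrable κ) :
    IntegrableOn (fun x => ∫ s in Ioc 0 1, κ x s ^ 2) (Ioc 0 1) :=
  hκ.integrable_prod.integral_prod_left

theorem integral_integral_sq_section (hκ : LowerKernelSqIntegrable κ) :
    ∫ x in Ioc 0 1, ∫ s in Ioc 0 1, κ x s ^ 2 = ∫ p in Ioc 0 1 ×ˢ Ioc 0 1, κ p.1 p.2 ^ 2 := by
  rw [Measure.volume_eq_prod, ← Measure.prod_restrict]
  exact (integral_prod _ hκ.integrable_prod).symm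

end LowerKernelSqIntegrable

theorem kernelTransform_eq_setIntegral (hκ : ∀ x y, x < y → κ x y = 0) (hx0 : 0 ≤ x)
    (hx1 : x ≤ 1) :
    kernelTransform κ ψ x = ∫ s in Ioc 0 1, κ x s * (ψ (s + x) - ψ (s - x)) := by
  rw [kernelTransform, intervalIntegral.integral_of_le hx0]
  refine (setIntegral_eq_of_subset_of_forall_sdiff_eq_zero measurableSet_Ioc
    (Ioc_subset_Ioc_right hx1) fun s hs => ?_).symm
  rw [hκ x s (lt_of_not_ge fun h => hs.2 ⟨hs.1.1, h⟩), zero_mul]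

theorem aestronglyMeasurable_kernelTransform (hψ : Measurable ψ)
    (hκ : LowerKernelSqIntegrable κ) :
    AEStronglyMeasurable (kernelTransform κ ψ) (volume.restrict (Ioc 0 1)) := by
  have hκm := hκ.measurable
  have hmeas : StronglyMeasurable fun x => ∫ s in Ioc 0 1, κ x s * (ψ (s + x) - ψ (s - x)) :=
    StronglyMeasurable.integral_prod_right'
      (f := fun p : ℝ × ℝ => κ p.1 p.2 * (ψ (p.2 + p.1) - ψ (p.2 - p.1)))
      (by fun_prop : Measurable _).stronglyMeasurable
  refine hmeas.aestronglyMeasurable.congr ?_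
  filter_upwards [ae_restrict_mem measurableSet_Ioc] with x hx
  exact (kernelTransform_eq_setIntegral hκ.eq_zero_of_lt hx.1.le hx.2).symm

theorem intervalIntegrable_kernel_mul_reflect (hψ : EvenSqIntegrable ψ)
    (hκ : Measurable (Function.uncurry κ)) (hx0 : 0 ≤ x) (hx1 : x ≤ 1)
    (hκx : IntegrableOn (fun s => κ x s ^ 2) (Ioc 0 1)) :
    IntervalIntegrable (fun s => κ x s * (ψ (s + x) - ψ (s - x))) volume 0 x := by
  have hm := hψ.measurable
  rw [intervalIntegrable_iff_integrableOn_Ioc_of_le hx0]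
  exact integrable_mul_of_integrable_sq hκ.of_uncurry_left.aestronglyMeasurable
    (by fun_prop : Measurable fun s => ψ (s + x) - ψ (s - x)).aestronglyMeasurable
    (hκx.mono_set (Ioc_subset_Ioc_right hx1))
    ((intervalIntegrable_iff_integrableOn_Ioc_of_le hx0).1
      (hψ.intervalIntegrable_sq_reflect hx0 hx1))

theorem sq_kernelTransform_le (hψ : EvenSqIntegrable ψ) (hκ : Measurable (Function.uncurry κ))
    (hx0 : 0 ≤ x) (hx1 : x ≤ 1) (hκx : IntegrableOn (fun s => κ x s ^ 2) (Ioc 0 1)) :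
    kernelTransform κ ψ x ^ 2 ≤ (∫ s in Ioc 0 1, κ x s ^ 2) * (2 * ∫ s in Ioc 0 2, ψ s ^ 2) := by
  have hκx' : IntegrableOn (fun s => κ x s ^ 2) (Ioc 0 x) :=
    hκx.mono_set (Ioc_subset_Ioc_right hx1)
  have hreflect := hψ.intervalIntegrable_sq_reflect hx0 hx1
  have hprod := intervalIntegrable_kernel_mul_reflect hψ hκ hx0 hx1 hκx
  rw [intervalIntegrable_iff_integrableOn_Ioc_of_le hx0] at hreflect hprod
  calc kernelTransform κ ψ x ^ 2
      ≤ (∫ s in Ioc 0 x, κ x s ^ 2) * ∫ s in Ioc 0 x, (ψ (s + x) - ψ (s - x)) ^ 2 := by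
        rw [kernelTransform, intervalIntegral.integral_of_le hx0]
        exact sq_integral_mul_le_integral_sq_mul_integral_sq hκx' hreflect hprod
    _ ≤ _ := by
        refine mul_le_mul ?_ ?_ (integral_nonneg fun s => sq_nonneg _)
          (integral_nonneg fun s => sq_nonneg _)
        · exact setIntegral_mono_set hκx (ae_of_all _ fun s => sq_nonneg _)
            (Ioc_subset_Ioc_right hx1).eventuallyLE
        · rw [← intervalIntegral.integral_of_le hx0]
          exact hψ.integral_sq_reflect_le hx0 hx1

theorem ae_sq_kernelTransform_le (hψ : EvenSqIntegrable ψ) (hκ : LowerKernelSqIntegrable κ) :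
    ∀ᵐ x ∂volume.restrict (Ioc (0:ℝ) 1),
      kernelTransform κ ψ x ^ 2 ≤ (∫ s in Ioc 0 1, κ x s ^ 2) * (2 * ∫ s in Ioc 0 2, ψ s ^ 2) := by
  filter_upwards [hκ.ae_integrableOn_sq_section, ae_restrict_mem measurableSet_Ioc]
    with x hκx hx
  exact sq_kernelTransform_le hψ hκ.measurable hx.1.le hx.2 hκx

theorem integrableOn_sq_kernelTransform (hψ : EvenSqIntegrable ψ)
    (hκ : LowerKernelSqIntegrable κ) :
    IntegrableOn (fun x => kernelTransform κ ψ x ^ 2) (Ioc 0 1) := by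
  refine (hκ.integrableOn_integral_sq_section.mul_const (2 * ∫ s in Ioc 0 2, ψ s ^ 2)).mono'
    ((aestronglyMeasurable_kernelTransform hψ.measurable hκ).pow 2) ?_
  filter_upwards [ae_sq_kernelTransform_le hψ hκ] with x hx
  rwa [Real.norm_eq_abs, abs_of_nonneg (sq_nonneg _)]

theorem integral_sq_kernelTransform_le (hψ : EvenSqIntegrable ψ)
    (hκ : LowerKernelSqIntegrable κ) :
    ∫ x in Ioc 0 1, kernelTransform κ ψ x ^ 2
      ≤ 2 * (∫ p in Ioc 0 1 ×ˢ Ioc 0 1, κ p.1 p.2 ^ 2) * ∫ s in Ioc 0 2, ψ s ^ 2 := by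
  calc ∫ x in Ioc 0 1, kernelTransform κ ψ x ^ 2
      ≤ ∫ x in Ioc 0 1, (∫ s in Ioc 0 1, κ x s ^ 2) * (2 * ∫ s in Ioc 0 2, ψ s ^ 2) :=
        integral_mono_of_nonneg (ae_of_all _ fun _ => sq_nonneg _)
          (hκ.integrableOn_integral_sq_section.mul_const _) (ae_sq_kernelTransform_le hψ hκ)
    _ = _ := by
        rw [integral_mul_const, hκ.integral_integral_sq_section]
        ring

theorem ae_kernelTransform_sub_sub (hψ : EvenSqIntegrable ψ) (hψ' : EvenSqIntegrable ψ')
    (hκ : LowerKernelSqIntegrable κ) (hκ' : LowerKernelSqIntegrable κ') :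
    ∀ᵐ x ∂volume.restrict (Ioc (0:ℝ) 1),
      kernelTransform κ ψ x - kernelTransform κ' ψ' x
        = kernelTransform (κ - κ') ψ x + kernelTransform κ' (ψ - ψ') x := by
  filter_upwards [hκ.ae_integrableOn_sq_section, hκ'.ae_integrableOn_sq_section,
    (hκ.sub hκ').ae_integrableOn_sq_section, ae_restrict_mem measurableSet_Ioc]
    with x hκx hκ'x hδx hx
  have hint := fun {κ ψ} (hψ : EvenSqIntegrable ψ) (hκ : LowerKernelSqIntegrable κ) hκx =>
    intervalIntegrable_kernel_mul_reflect hψ hκ.measurable hx.1.le hx.2 hκx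
  simp only [kernelTransform]
  rw [← intervalIntegral.integral_sub (hint hψ hκ hκx) (hint hψ' hκ' hκ'x),
    ← intervalIntegral.integral_add (hint hψ (hκ.sub hκ') hδx) (hint (hψ.sub hψ') hκ' hκ'x)]
  refine intervalIntegral.integral_congr fun s _ => ?_
  simp only [Pi.sub_apply]
  ring

end KernelTransform

theorem tendsto_integral_sq_kernelTransform_sub {κ : ℕ → ℝ → ℝ → ℝ} {κ₀ : ℝ → ℝ → ℝ}
    {ψ : ℕ → ℝ → ℝ} {ψ₀ : ℝ → ℝ} (hψ : ∀ n, EvenSqIntegrable (ψ n))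
    (hψ₀ : EvenSqIntegrable ψ₀) (hκ : ∀ n, LowerKernelSqIntegrable (κ n))
    (hκ₀ : LowerKernelSqIntegrable κ₀)
    (hψlim : Tendsto (fun n => ∫ s in Ioc 0 2, (ψ n s - ψ₀ s) ^ 2) atTop (𝓝 0))
    (hκlim : Tendsto (fun n => ∫ p in Ioc 0 1 ×ˢ Ioc 0 1, (κ n p.1 p.2 - κ₀ p.1 p.2) ^ 2)
      atTop (𝓝 0)) :
    Tendsto (fun n => ∫ x in Ioc 0 1, (kernelTransform (κ n) (ψ n) x - kernelTransform κ₀ ψ₀ x) ^ 2)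
      atTop (𝓝 0) := by
  have hsplit : ∀ n, ∫ x in Ioc 0 1, (kernelTransform (κ n) (ψ n) x - kernelTransform κ₀ ψ₀ x) ^ 2
      = ∫ x in Ioc 0 1, (1 * kernelTransform (κ n - κ₀) (ψ n) x
          + 1 * kernelTransform κ₀ (ψ n - ψ₀) x) ^ 2 := fun n => by
    refine integral_congr_ae ?_
    filter_upwards [ae_kernelTransform_sub_sub (hψ n) hψ₀ (hκ n) hκ₀] with x hx
    rw [hx, one_mul, one_mul]
  simp_rw [hsplit]
  refine tendsto_integral_sq_add 1 1
    (fun n => integrableOn_sq_kernelTransform (hψ n) ((hκ n).sub hκ₀))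
    (fun n => integrableOn_sq_kernelTransform ((hψ n).sub hψ₀) hκ₀) ?_ ?_
  · refine squeeze_zero
      (g := fun n => 2 * (∫ p in Ioc 0 1 ×ˢ Ioc 0 1, (κ n p.1 p.2 - κ₀ p.1 p.2) ^ 2)
        * (2 * (∫ s in Ioc 0 2, (ψ n s - ψ₀ s) ^ 2) + 2 * ∫ s in Ioc 0 2, ψ₀ s ^ 2))
      (fun n => integral_nonneg fun x => sq_nonneg _) (fun n => ?_) ?_
    · have hbound := integral_sq_kernelTransform_le (hψ n) ((hκ n).sub hκ₀)
      simp only [Pi.sub_apply] at hbound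
      refine hbound.trans (mul_le_mul_of_nonneg_left ?_ (by positivity))
      exact integral_sq_le_two_mul_integral_sq_sub_add (hψ n).integrableOn_sq
        hψ₀.integrableOn_sq ((hψ n).sub hψ₀).integrableOn_sq
    · simpa using (hκlim.const_mul 2).mul ((hψlim.const_mul 2).add_const
        (2 * ∫ s in Ioc 0 2, ψ₀ s ^ 2))
  · refine squeeze_zero (fun n => integral_nonneg fun x => sq_nonneg _)
      (fun n => integral_sq_kernelTransform_le ((hψ n).sub hψ₀) hκ₀) ?_
    simpa using hψlim.const_mul (2 * ∫ p in Ioc 0 1 ×ˢ Ioc 0 1, κ₀ p.1 p.2 ^ 2)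

/-- If `φ_n → φ₀` in `L²(0,2)` (functions extended evenly) and the lower-triangular kernels
`k_n → k₀` in `L²((0,1)²)`, then
`σ_n(x) = −2φ_n(2x) − 2∫₀ˣ k_n(x,s) f_n(s,x) ds`, with `f_n(s,x) = φ_n(s+x) − φ_n(s−x)`,
converge in `L²(0,1)` to `σ(x) = −2φ₀(2x) − 2∫₀ˣ k₀(x,s) f₀(s,x) ds`; moreover
`‖∫₀ˣ k₀(x,s) f₀(s,x) ds‖_{L²(0,1)} ≤ √2 ‖K₀‖_{𝔖₂} ‖φ₀‖_{L²(0,2)}`. -/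
theorem stmt18 (φ : ℕ → ℝ → ℝ) (φ₀ : ℝ → ℝ) (k : ℕ → ℝ → ℝ → ℝ) (k₀ : ℝ → ℝ → ℝ)
    (hφmeas : ∀ n, Measurable (φ n)) (hφ₀meas : Measurable φ₀)
    (hevenn : ∀ n s, φ n (-s) = φ n s) (heven : ∀ s, φ₀ (-s) = φ₀ s)
    (hkmeas : ∀ n, Measurable (Function.uncurry (k n)))
    (hk₀meas : Measurable (Function.uncurry k₀))
    (hksupp : ∀ n x y, x < y → k n x y = 0) (hk₀supp : ∀ x y, x < y → k₀ x y = 0)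
    (hφnint : ∀ n, IntegrableOn (fun s => φ n s ^ 2) (Set.Ioc (0:ℝ) 2))
    (hφint : IntegrableOn (fun s => φ₀ s ^ 2) (Set.Ioc (0:ℝ) 2))
    (hknL2 : ∀ n, IntegrableOn (fun p : ℝ × ℝ => k n p.1 p.2 ^ 2)
      (Set.Ioc (0:ℝ) 1 ×ˢ Set.Ioc (0:ℝ) 1))
    (hkL2 : IntegrableOn (fun p : ℝ × ℝ => k₀ p.1 p.2 ^ 2)
      (Set.Ioc (0:ℝ) 1 ×ˢ Set.Ioc (0:ℝ) 1))
    (hφconv : Tendsto (fun n => ∫ s in (0:ℝ)..2, (φ n s - φ₀ s) ^ 2) atTop (nhds 0))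
    (hkconv : Tendsto (fun n => ∫ p in Set.Ioc (0:ℝ) 1 ×ˢ Set.Ioc (0:ℝ) 1,
        (k n p.1 p.2 - k₀ p.1 p.2) ^ 2) atTop (nhds 0)) :
    Tendsto (fun n => ∫ x in (0:ℝ)..1,
        (((-2) * φ n (2 * x) - 2 * ∫ s in (0:ℝ)..x, k n x s * (φ n (s + x) - φ n (s - x)))
          - ((-2) * φ₀ (2 * x)
              - 2 * ∫ s in (0:ℝ)..x, k₀ x s * (φ₀ (s + x) - φ₀ (s - x)))) ^ 2)
      atTop (nhds 0)
    ∧ Real.sqrt (∫ x in (0:ℝ)..1,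
          (∫ s in (0:ℝ)..x, k₀ x s * (φ₀ (s + x) - φ₀ (s - x))) ^ 2)
      ≤ Real.sqrt 2
        * Real.sqrt (∫ p in Set.Ioc (0:ℝ) 1 ×ˢ Set.Ioc (0:ℝ) 1, k₀ p.1 p.2 ^ 2)
        * Real.sqrt (∫ s in (0:ℝ)..2, φ₀ s ^ 2) := by
  have hφ₀ : EvenSqIntegrable φ₀ := ⟨hφ₀meas, heven, hφint⟩
  have hφ : ∀ n, EvenSqIntegrable (φ n) := fun n => ⟨hφmeas n, hevenn n, hφnint n⟩
  have hk₀ : LowerKernelSqIntegrable k₀ := ⟨hk₀meas, hk₀supp, hkL2⟩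
  have hk : ∀ n, LowerKernelSqIntegrable (k n) := fun n => ⟨hkmeas n, hksupp n, hknL2 n⟩
  simp only [intervalIntegral.integral_of_le zero_le_one,
    intervalIntegral.integral_of_le zero_le_two] at hφconv ⊢
  refine ⟨?_, ?_⟩
  · have hdilate : Tendsto (fun n => ∫ x in Ioc 0 1, (φ n (2 * x) - φ₀ (2 * x)) ^ 2)
        atTop (𝓝 0) := by
      refine (mul_zero (2⁻¹ : ℝ) ▸ hφconv.const_mul 2⁻¹).congr fun n => ?_
      exact (setIntegral_comp_two_mul fun s => (φ n s - φ₀ s) ^ 2).symm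
    refine (tendsto_integral_sq_add (-2) (-2)
      (fun n => integrableOn_comp_two_mul ((hφ n).sub hφ₀).integrableOn_sq)
      (fun n => integrable_sub_sq_of_integrable_sq
        (aestronglyMeasurable_kernelTransform (hφmeas n) (hk n))
        (aestronglyMeasurable_kernelTransform hφ₀meas hk₀)
        (integrableOn_sq_kernelTransform (hφ n) (hk n))
        (integrableOn_sq_kernelTransform hφ₀ hk₀))
      hdilate (tendsto_integral_sq_kernelTransform_sub hφ hφ₀ hk hk₀ hφconv hkconv)).congr
      fun n => ?_
    congr 1
    ext x
    simp only [kernelTransform, Pi.sub_apply]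
    ring
  · rw [← Real.sqrt_mul zero_le_two, ← Real.sqrt_mul (by positivity)]
    exact Real.sqrt_le_sqrt (integral_sq_kernelTransform_le hφ₀ hk₀)
end
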